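/- The Cayley-Dickson twist γ is proper with respect to the group operation bitwise XOR on ℕ: γ(p,q)γ(q,q) = γ(p XOR q, q) and γ(p,p)γ(p,q) = γ(p, p XOR q) for all p, q ∈ ℕ. -/

import Mathlib

/-- The Cayley-Dickson twist, defined recursively by γ(0,0) = 1,
γ(2p,2q) = γ(p,q), γ(2p+1,2q) = γ(q,p),
γ(2p,2q+1) = -γ(p,q) if p ≠ 0 and 1 if p = 0,
γ(2p+1,2q+1) = γ(q,p) if p ≠ 0 and -1 if p = 0. -/
def cdTwist (p q : ℕ) : ℤ :=
  if p = 0 ∧ q = 0 then 1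
  else if p % 2 = 0 then
    if q % 2 = 0 then cdTwist (p / 2) (q / 2)
    else if p / 2 = 0 then 1 else -cdTwist (p / 2) (q / 2)
  else
    if q % 2 = 0 then cdTwist (q / 2) (p / 2)
    else if p / 2 = 0 then -1 else cdTwist (q / 2) (p / 2)
termination_by p + q
decreasing_by all_goals omega

/-!
Write `γ = cdTwist` and `⊕ = ^^^`. Since `γ(q, q) = -1` for `q ≠ 0` (and `γ(p, 0) = γ(0, q) = 1`),
the two identities say `γ(p ⊕ q, q) = -γ(p, q)` for `q ≠ 0` and `γ(p, p ⊕ q) = -γ(p, q)` for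
`p ≠ 0`. Splitting `p` and `q` by parity, `(2a + i) ⊕ (2b + j) = 2(a ⊕ b) + (i ⊕ j)` and the
recursion for `γ` reduce each of them to one of the two at `(a, b)` or `(b, a)`, so they are proved
together by induction on `p + q`; the odd cases also use the antisymmetry `γ(p, q) = -γ(q, p)` for
distinct nonzero `p`, `q`.
-/

namespace Nat

theorem two_mul_xor_two_mul (a b : ℕ) : 2 * a ^^^ 2 * b = 2 * (a ^^^ b) := by
  simpa [bit] using xor_bit false a false b

theorem two_mul_add_one_xor_two_mul (a b : ℕ) : (2 * a + 1) ^^^ 2 * b = 2 * (a ^^^ b) + 1 := by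
  simpa [bit] using xor_bit true a false b

theorem two_mul_xor_two_mul_add_one (a b : ℕ) : 2 * a ^^^ (2 * b + 1) = 2 * (a ^^^ b) + 1 := by
  simpa [bit] using xor_bit false a true b

theorem two_mul_add_one_xor_two_mul_add_one (a b : ℕ) :
    (2 * a + 1) ^^^ (2 * b + 1) = 2 * (a ^^^ b) := by
  simpa [bit] using xor_bit true a true b

end Nat

theorem cdTwist_even_even (a b : ℕ) : cdTwist (2 * a) (2 * b) = cdTwist a b := by
  rw [cdTwist]
  by_cases h : a = 0 ∧ b = 0
  · obtain ⟨rfl, rfl⟩ := h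
    simp [cdTwist]
  · simp [Nat.mul_mod_right, h]

theorem cdTwist_odd_even (a b : ℕ) : cdTwist (2 * a + 1) (2 * b) = cdTwist b a := by
  rw [cdTwist]
  simp [Nat.mul_mod_right, Nat.add_mod, show (2 * a + 1) / 2 = a by omega]

theorem cdTwist_even_odd (a b : ℕ) :
    cdTwist (2 * a) (2 * b + 1) = if a = 0 then 1 else -cdTwist a b := by
  rw [cdTwist]
  simp [Nat.mul_mod_right, Nat.add_mod, show (2 * b + 1) / 2 = b by omega]

theorem cdTwist_odd_odd (a b : ℕ) :
    cdTwist (2 * a + 1) (2 * b + 1) = if a = 0 then -1 else cdTwist b a := by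
  rw [cdTwist]
  simp [Nat.add_mod, show (2 * a + 1) / 2 = a by omega, show (2 * b + 1) / 2 = b by omega]

theorem cdTwist_zero_left (q : ℕ) : cdTwist 0 q = 1 := by
  rw [cdTwist]
  by_cases hq : q = 0
  · simp [hq]
  · simp [hq, cdTwist_zero_left (q / 2)]
termination_by q
decreasing_by omega

theorem cdTwist_zero_right (p : ℕ) : cdTwist p 0 = 1 := by
  rw [cdTwist]
  by_cases hp : p = 0
  · simp [hp]
  · simp [hp, cdTwist_zero_left, cdTwist_zero_right (p / 2)]
termination_by p
decreasing_by omega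

theorem cdTwist_self {p : ℕ} (hp : p ≠ 0) : cdTwist p p = -1 := by
  obtain ⟨a, rfl | rfl⟩ := Nat.even_or_odd' p
  · rw [cdTwist_even_even, cdTwist_self (by omega)]
  · rw [cdTwist_odd_odd]
    split_ifs with ha
    · rfl
    · exact cdTwist_self ha
termination_by p

theorem cdTwist_antisymm {p q : ℕ} (hp : p ≠ 0) (hq : q ≠ 0) (hpq : p ≠ q) :
    cdTwist p q = -cdTwist q p := by
  obtain ⟨a, rfl | rfl⟩ := Nat.even_or_odd' p <;> obtain ⟨b, rfl | rfl⟩ := Nat.even_or_odd' q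
  · rw [cdTwist_even_even, cdTwist_even_even]
    exact cdTwist_antisymm (by omega) (by omega) (by omega)
  · simp [cdTwist_even_odd, cdTwist_odd_even, show a ≠ 0 by omega]
  · simp [cdTwist_even_odd, cdTwist_odd_even, show b ≠ 0 by omega]
  · rw [cdTwist_odd_odd, cdTwist_odd_odd]
    rcases eq_or_ne a 0 with rfl | ha
    · simp [show b ≠ 0 by omega, cdTwist_zero_left]
    rcases eq_or_ne b 0 with rfl | hb
    · simp [ha, cdTwist_zero_left]
    simp only [ha, hb, if_false]
    exact cdTwist_antisymm hb ha (by omega)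
termination_by p + q

mutual

theorem cdTwist_xor_left {p q : ℕ} (hq : q ≠ 0) : cdTwist (p ^^^ q) q = -cdTwist p q := by
  obtain ⟨a, rfl | rfl⟩ := Nat.even_or_odd' p <;> obtain ⟨b, rfl | rfl⟩ := Nat.even_or_odd' q
  · rw [Nat.two_mul_xor_two_mul, cdTwist_even_even, cdTwist_even_even]
    exact cdTwist_xor_left (by omega)
  · rw [Nat.two_mul_xor_two_mul_add_one, cdTwist_odd_odd, cdTwist_even_odd]
    rcases eq_or_ne a 0 with rfl | ha
    · rcases eq_or_ne b 0 with rfl | hb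
      · simp
      · simp [hb, cdTwist_self hb]
    rcases eq_or_ne a b with rfl | hab
    · simp [ha, cdTwist_self ha]
    rcases eq_or_ne b 0 with rfl | hb
    · simp [ha, cdTwist_zero_left, cdTwist_zero_right]
    rw [if_neg (by simpa [Nat.xor_eq_zero_iff] using hab), if_neg ha, neg_neg, Nat.xor_comm,
      cdTwist_xor_right hb, cdTwist_antisymm hb ha hab.symm, neg_neg]
  · rw [Nat.two_mul_add_one_xor_two_mul, cdTwist_odd_even, cdTwist_odd_even, Nat.xor_comm]
    exact cdTwist_xor_right (by omega)
  · rw [Nat.two_mul_add_one_xor_two_mul_add_one, cdTwist_even_odd, cdTwist_odd_odd]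
    rcases eq_or_ne a 0 with rfl | ha
    · rcases eq_or_ne b 0 with rfl | hb
      · simp
      · simp [hb, cdTwist_self hb]
    rcases eq_or_ne a b with rfl | hab
    · simp [ha, cdTwist_self ha]
    rcases eq_or_ne b 0 with rfl | hb
    · simp [ha, cdTwist_zero_left, cdTwist_zero_right]
    rw [if_neg (by simpa [Nat.xor_eq_zero_iff] using hab), if_neg ha,
      cdTwist_xor_left hb, cdTwist_antisymm ha hb hab, neg_neg]
termination_by p + q

theorem cdTwist_xor_right {p q : ℕ} (hp : p ≠ 0) : cdTwist p (p ^^^ q) = -cdTwist p q := by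
  obtain ⟨a, rfl | rfl⟩ := Nat.even_or_odd' p <;> obtain ⟨b, rfl | rfl⟩ := Nat.even_or_odd' q
  · rw [Nat.two_mul_xor_two_mul, cdTwist_even_even, cdTwist_even_even]
    exact cdTwist_xor_right (by omega)
  · have ha : a ≠ 0 := by omega
    rw [Nat.two_mul_xor_two_mul_add_one, cdTwist_even_odd, cdTwist_even_odd, if_neg ha, if_neg ha,
      cdTwist_xor_right ha]
  · rw [Nat.two_mul_add_one_xor_two_mul, cdTwist_odd_odd, cdTwist_odd_even]
    rcases eq_or_ne a 0 with rfl | ha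
    · simp [cdTwist_zero_right]
    rw [if_neg ha, Nat.xor_comm]
    exact cdTwist_xor_left ha
  · rw [Nat.two_mul_add_one_xor_two_mul_add_one, cdTwist_odd_even, cdTwist_odd_odd]
    rcases eq_or_ne a 0 with rfl | ha
    · simp [cdTwist_zero_right]
    rw [if_neg ha, Nat.xor_comm]
    exact cdTwist_xor_left ha
termination_by p + q

end

/-- The Cayley-Dickson twist is proper with respect to bitwise XOR on ℕ. -/
theorem cdTwist_proper :
    ∀ p q : ℕ,
      cdTwist p q * cdTwist q q = cdTwist (p ^^^ q) q ∧
      cdTwist p p * cdTwist p q = cdTwist p (p ^^^ q) := by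
  intro p q
  constructor
  · rcases eq_or_ne q 0 with rfl | hq
    · simp [cdTwist_zero_right]
    · rw [cdTwist_self hq, cdTwist_xor_left hq, mul_neg_one]
  · rcases eq_or_ne p 0 with rfl | hp
    · simp [cdTwist_zero_left]
    · rw [cdTwist_self hp, cdTwist_xor_right hp, neg_one_mul]
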